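/- arXiv:2410.12457 — 2 statements merged into one kernel-verified Lean document; each statement's English description precedes it below -/
import Mathlib

section
/- For a convex integrable function F : ℝ^d → ℝ and a Gaussian distribution with mean μ and covariance Σ, the reparameterized objective J(μ, Σ^{1/2}) := E_{x ~ N(μ, Σ)}[F(x)] = E_{z ~ N(0, I)}[F(μ + Σ^{1/2} z)] is jointly convex in the pair (μ, Σ^{1/2}). -/
open MeasureTheory ProbabilityTheory Matrix

noncomputable def stdGaussian (d : ℕ) : Measure (Fin d → ℝ) :=
  Measure.pi fun _ => gaussianReal 0 1

/-- For a convex integrable `F`, the reparameterized objective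
`J(μ, A) = E_{z ~ N(0,I)}[F(μ + A z)]` (where `A = Σ^{1/2}`) is jointly convex
in the pair `(μ, A)`. -/
theorem stmt1 {d : ℕ} (F : (Fin d → ℝ) → ℝ) (hF : ConvexOn ℝ Set.univ F)
    (hint : ∀ (μ : Fin d → ℝ) (A : Matrix (Fin d) (Fin d) ℝ),
      Integrable (fun z => F (μ + A.mulVec z)) (stdGaussian d)) :
    ConvexOn ℝ Set.univ
      (fun p : (Fin d → ℝ) × Matrix (Fin d) (Fin d) ℝ =>
        ∫ z, F (p.1 + p.2.mulVec z) ∂(stdGaussian d)) := by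
  refine ⟨convex_univ, fun p _ q _ a b ha hb hab => ?_⟩
  have key : ∀ z, F ((a • p + b • q).1 + (a • p + b • q).2.mulVec z)
      ≤ a * F (p.1 + p.2.mulVec z) + b * F (q.1 + q.2.mulVec z) := by
    intro z
    have h : (a • p + b • q).1 + (a • p + b • q).2.mulVec z
        = a • (p.1 + p.2.mulVec z) + b • (q.1 + q.2.mulVec z) := by
      simp [Prod.add_def, Prod.smul_def, Matrix.add_mulVec, Matrix.smul_mulVec,
        smul_add]
      abel
    rw [h]
    exact hF.2 (Set.mem_univ _) (Set.mem_univ _) ha hb hab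
  calc ∫ z, F ((a • p + b • q).1 + (a • p + b • q).2.mulVec z) ∂(stdGaussian d)
      ≤ ∫ z, (a * F (p.1 + p.2.mulVec z) + b * F (q.1 + q.2.mulVec z)) ∂(stdGaussian d) := by
        exact integral_mono (hint _ _) (((hint p.1 p.2).const_mul a).add
          ((hint q.1 q.2).const_mul b)) key
    _ = a * ∫ z, F (p.1 + p.2.mulVec z) ∂(stdGaussian d)
        + b * ∫ z, F (q.1 + q.2.mulVec z) ∂(stdGaussian d) := by
        rw [integral_add ((hint p.1 p.2).const_mul a) ((hint q.1 q.2).const_mul b),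
          integral_const_mul, integral_const_mul]
  -- done
end

section
/- Let δ_μ = (ρ Σ g) / sqrt(‖Σ G‖_F² + (1/2)‖Σ^{1/2} g‖₂²), where Σ is a positive definite diagonal matrix, g ∈ ℝ^d, and G is a diagonal matrix, with the denominator nonzero. Then ‖δ_μ‖₂ ≤ ρ √2 ‖Σ^{1/2}‖_F. -/
open Matrix Finset

/-- For the SABO mean perturbation `δμ = ρ Σ g / sqrt(‖Σ G‖_F² + (1/2)‖Σ^{1/2} g‖₂²)`
with `Σ` positive definite diagonal (and `A = Σ^{1/2}` its diagonal square root), we have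
`‖δμ‖₂ ≤ ρ √2 ‖Σ^{1/2}‖_F`. -/
theorem stmt12 {d : ℕ} (S A G : Matrix (Fin d) (Fin d) ℝ) (g : Fin d → ℝ) (ρ D : ℝ)
    (hρ : 0 ≤ ρ) (hS : S.PosDef) (hSdiag : S.IsDiag) (hGdiag : G.IsDiag)
    (hA : A.PosSemidef) (hAdiag : A.IsDiag) (hAA : A * A = S)
    (hD : D = Real.sqrt ((∑ i, ∑ j, ((S * G) i j) ^ 2) + (1 / 2) * ∑ i, (A.mulVec g i) ^ 2))
    (hDne : D ≠ 0) :
    Real.sqrt (∑ i, (((ρ / D) • S.mulVec g) i) ^ 2)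
      ≤ ρ * Real.sqrt 2 * Real.sqrt (∑ i, ∑ j, (A i j) ^ 2) := by
  set X := ∑ i, ∑ j, ((S * G) i j) ^ 2 with hX
  set Y := ∑ i, (A.mulVec g i) ^ 2 with hY
  set F := ∑ i, ∑ j, (A i j) ^ 2 with hF
  have hXnn : 0 ≤ X := hX ▸ Finset.sum_nonneg fun i _ =>
    Finset.sum_nonneg fun j _ => sq_nonneg _
  have hYnn : 0 ≤ Y := hY ▸ Finset.sum_nonneg fun i _ => sq_nonneg _
  have hFnn : 0 ≤ F := hF ▸ Finset.sum_nonneg fun i _ =>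
    Finset.sum_nonneg fun j _ => sq_nonneg _
  clear_value X Y F
  have hDnn : 0 ≤ D := hD ▸ Real.sqrt_nonneg _
  have hD0 : 0 < D := lt_of_le_of_ne hDnn (Ne.symm hDne)
  have hD2 : D ^ 2 = X + (1 / 2) * Y := by
    rw [hD]; exact Real.sq_sqrt (by linarith)
  have hY2 : Y ≤ 2 * D ^ 2 := by nlinarith
  have hSg : S.mulVec g = A.mulVec (A.mulVec g) := by
    rw [Matrix.mulVec_mulVec, hAA]
  -- Cauchy–Schwarz: ‖A v‖² ≤ ‖A‖_F² ‖v‖²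
  have key : ∑ i, (S.mulVec g i) ^ 2 ≤ F * Y := by
    rw [hSg]
    calc ∑ i, (A.mulVec (A.mulVec g) i) ^ 2
        ≤ ∑ i, (∑ j, (A i j) ^ 2) * (∑ j, (A.mulVec g j) ^ 2) := by
          apply Finset.sum_le_sum
          intro i _
          have := Finset.sum_mul_sq_le_sq_mul_sq Finset.univ (fun j => A i j)
            (fun j => A.mulVec g j)
          simpa [Matrix.mulVec, dotProduct] using this
      _ = F * Y := by rw [hF, hY, Finset.sum_mul]
  have hsum : ∑ i, (((ρ / D) • S.mulVec g) i) ^ 2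
      = (ρ / D) ^ 2 * ∑ i, (S.mulVec g i) ^ 2 := by
    simp [Pi.smul_apply, smul_eq_mul, mul_pow, Finset.mul_sum]
  rw [hsum, Real.sqrt_mul (sq_nonneg _), Real.sqrt_sq (by positivity)]
  have h1 : Real.sqrt (∑ i, (S.mulVec g i) ^ 2) ≤ Real.sqrt F * Real.sqrt Y := by
    rw [← Real.sqrt_mul hFnn]
    exact Real.sqrt_le_sqrt key
  have h2 : Real.sqrt Y ≤ Real.sqrt 2 * D := by
    have h := Real.sqrt_le_sqrt hY2
    rwa [Real.sqrt_mul (by norm_num : (0:ℝ) ≤ 2), Real.sqrt_sq hDnn] at h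
  calc ρ / D * Real.sqrt (∑ i, (S.mulVec g i) ^ 2)
      ≤ ρ / D * (Real.sqrt F * (Real.sqrt 2 * D)) := by
        apply mul_le_mul_of_nonneg_left _ (by positivity)
        calc Real.sqrt (∑ i, (S.mulVec g i) ^ 2) ≤ Real.sqrt F * Real.sqrt Y := h1
          _ ≤ Real.sqrt F * (Real.sqrt 2 * D) :=
            mul_le_mul_of_nonneg_left h2 (Real.sqrt_nonneg _)
    _ = ρ * Real.sqrt 2 * Real.sqrt F := by field_simp
end
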